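/- arXiv:2210.16706 — 7 statements merged into one kernel-verified Lean document; each statement's English description precedes it below -/
import Mathlib

section
/- Let G be the semidirect product (ℤ/8ℤ)ˣ ⋉ ℤ/8ℤ, with underlying set (ℤ/8ℤ)ˣ × ℤ/8ℤ and multiplication (a,b)·(c,d) = (ac, b + a·d). Then the subgroups A = {(1,0), (3,0), (5,0), (7,0)} and B = {(1,0), (3,4), (5,4), (7,0)} of G are not conjugate: there is no g ∈ G with g·A·g⁻¹ = B. -/
/-!
Conjugating `(a, 0)` by `g = (c, t)` gives `(a, (1 - a) t)`: the unit part is unchanged because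
`(ℤ/8ℤ)ˣ` is abelian. A conjugate of `A` equal to `B` would therefore send `(3, 0) ↦ (3, 4)` and
`(5, 0) ↦ (5, 4)`, i.e. `-2t = 4` and `-4t = 4` in `ℤ/8ℤ`; the first forces `t` even and the
second `t` odd.
-/

/-- The monoid homomorphism from additive automorphisms of `A` to multiplicative
automorphisms of `Multiplicative A`. -/
def addAutToMulAut (A : Type*) [AddGroup A] : Multiplicative (AddAut A) →* MulAut (Multiplicative A) where
  toFun e := AddEquiv.toMultiplicative (Multiplicative.toAdd e)
  map_one' := rfl
  map_mul' := fun _ _ => rfl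

/-- The action of `(ℤ/8ℤ)ˣ` on `ℤ/8ℤ` by multiplication, as a homomorphism to the
automorphism group of `Multiplicative (ℤ/8ℤ)`. -/
def phi8 : (ZMod 8)ˣ →* MulAut (Multiplicative (ZMod 8)) :=
  (addAutToMulAut (ZMod 8)).comp (DistribMulAction.toAddAut (ZMod 8)ˣ (ZMod 8))

/-- The semidirect product `G = (ℤ/8ℤ)ˣ ⋉ ℤ/8ℤ`, realized with normal factor
`Multiplicative (ℤ/8ℤ)` and acting factor `(ℤ/8ℤ)ˣ`; the multiplication satisfies
`(a, b) * (c, d) = (a * c, b + a • d)` (components written as (unit, additive part)). -/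
abbrev G8 := SemidirectProduct (Multiplicative (ZMod 8)) (ZMod 8)ˣ phi8

/-- The element of `G8` corresponding to the pair `(a, b) ∈ (ℤ/8ℤ)ˣ × ℤ/8ℤ`. -/
def g8 (a : (ZMod 8)ˣ) (b : ZMod 8) : G8 := ⟨Multiplicative.ofAdd b, a⟩

def u1 : (ZMod 8)ˣ := 1
def u3 : (ZMod 8)ˣ := ZMod.unitOfCoprime 3 (by decide)
def u5 : (ZMod 8)ˣ := ZMod.unitOfCoprime 5 (by decide)
def u7 : (ZMod 8)ˣ := ZMod.unitOfCoprime 7 (by decide)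

namespace SemidirectProduct

variable {N H : Type*} [Group N] [Group H] {φ : H →* MulAut N}

theorem mul_inr_mul_inv (g : N ⋊[φ] H) (h : H) :
    g * inr h * g⁻¹ =
      ⟨g.left * φ (g.right * h * g.right⁻¹) g.left⁻¹, g.right * h * g.right⁻¹⟩ := by
  ext <;> simp [mul_assoc]

end SemidirectProduct

theorem phi8_apply (u : (ZMod 8)ˣ) (x : Multiplicative (ZMod 8)) :
    phi8 u x = Multiplicative.ofAdd (u * Multiplicative.toAdd x) :=
  rfl

theorem g8_inj {a c : (ZMod 8)ˣ} {b d : ZMod 8} : g8 a b = g8 c d ↔ a = c ∧ b = d := by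
  simp [g8, SemidirectProduct.ext_iff, and_comm]

theorem mul_g8_mul_inv (g : G8) (a : (ZMod 8)ˣ) :
    g * g8 a 0 * g⁻¹ = g8 a ((1 - a) * Multiplicative.toAdd g.left) := by
  rw [show g8 a 0 = SemidirectProduct.inr a from rfl, SemidirectProduct.mul_inr_mul_inv,
    mul_inv_cancel_comm]
  ext
  · simp only [g8, phi8_apply, toAdd_mul, toAdd_ofAdd, toAdd_inv]
    ring
  · rfl

/-- **Sunada subgroups of `(ℤ/8ℤ)ˣ ⋉ ℤ/8ℤ` are not conjugate.** There is no `g ∈ G` with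
`g • A • g⁻¹ = B`, where `A = {(1,0), (3,0), (5,0), (7,0)}` and
`B = {(1,0), (3,4), (5,4), (7,0)}`. -/
theorem semidirect_not_conjugate (A B : Subgroup G8)
    (hA : (A : Set G8) = {g8 u1 0, g8 u3 0, g8 u5 0, g8 u7 0})
    (hB : (B : Set G8) = {g8 u1 0, g8 u3 4, g8 u5 4, g8 u7 0}) :
    ¬ ∃ g : G8, (fun x => g * x * g⁻¹) '' (A : Set G8) = (B : Set G8) := by
  rintro ⟨g, hg⟩
  have conj_mem {a : (ZMod 8)ˣ} (ha : g8 a 0 ∈ (A : Set G8)) :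
      g8 a ((1 - a) * Multiplicative.toAdd g.left) ∈ (B : Set G8) := by
    rw [← mul_g8_mul_inv, ← hg]
    exact Set.mem_image_of_mem _ ha
  have h3 := conj_mem (a := u3) (by simp [hA])
  have h5 := conj_mem (a := u5) (by simp [hA])
  simp only [hB, Set.mem_insert_iff, Set.mem_singleton_iff, g8_inj] at h3 h5
  generalize Multiplicative.toAdd g.left = t at h3 h5
  revert t
  decide
end

section
/- In G = SL₃(𝔽₂), the opposite parabolic subgroups A = {a ∈ SL₃(𝔽₂) : a₂₁ = a₃₁ = 0} and B = {b ∈ SL₃(𝔽₂) : b₁₂ = b₁₃ = 0} (B is the set of transposes of elements of A) are almost conjugate: for every g ∈ G, the number of elements of A conjugate in G to g equals the number of elements of B conjugate in G to g. -/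
/-!
Transposition maps `A` bijectively onto `B`. Every square matrix over a field is similar to its
transpose, and over `𝔽₂` every invertible matrix has determinant one, so each `g ∈ SL₃(𝔽₂)` is
conjugate to `gᵀ` inside `SL₃(𝔽₂)`; we check this last fact by a finite computation. Hence
transposition preserves every conjugacy class, and restricts to a bijection between the elements
of `A` and of `B` lying in any given class.
-/

/-- `SL₃(𝔽₂)`, the special linear group of 3×3 matrices over the field with two elements. -/
abbrev SL3F2 := Matrix.SpecialLinearGroup (Fin 3) (ZMod 2)

def Subgroup.AlmostConjugate {G : Type*} [Group G] (A B : Subgroup G) : Prop :=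
  ∀ g : G, Nat.card {a : G // a ∈ A ∧ IsConj a g} = Nat.card {b : G // b ∈ B ∧ IsConj b g}

theorem Subgroup.almostConjugate_of_equiv {G : Type*} [Group G] {A B : Subgroup G} (e : G ≃ G)
    (he : ∀ x, IsConj (e x) x) (hAB : ∀ x, x ∈ A ↔ e x ∈ B) : A.AlmostConjugate B := fun _ =>
  Nat.card_congr <| e.subtypeEquiv fun x =>
    and_congr (hAB x) ⟨(he x).trans, (he x).symm.trans⟩

theorem Matrix.SpecialLinearGroup.transpose_involutive {n R : Type*} [DecidableEq n] [Fintype n]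
    [CommRing R] : Function.Involutive (transpose : SpecialLinearGroup n R → _) := fun A =>
  Subtype.ext A.1.transpose_transpose

namespace SL3F2

/-- Chosen by a greedy set-cover search over `SL₃(𝔽₂)`. -/
def transposeConjugators : List SL3F2 := [
    ⟨!![0, 0, 1; 0, 1, 0; 1, 0, 0], by decide⟩,
    ⟨!![0, 1, 0; 1, 0, 0; 0, 0, 1], by decide⟩,
    ⟨!![1, 0, 0; 0, 0, 1; 0, 1, 0], by decide⟩,
    ⟨!![1, 0, 0; 0, 1, 0; 0, 0, 1], by decide⟩,
    ⟨!![0, 1, 1; 1, 0, 1; 1, 1, 1], by decide⟩,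
    ⟨!![1, 0, 1; 0, 1, 1; 1, 1, 1], by decide⟩,
    ⟨!![0, 1, 0; 1, 1, 0; 0, 0, 1], by decide⟩,
    ⟨!![1, 1, 0; 1, 0, 0; 0, 0, 1], by decide⟩,
    ⟨!![0, 1, 0; 1, 0, 1; 0, 1, 1], by decide⟩,
    ⟨!![0, 1, 0; 1, 1, 1; 0, 1, 1], by decide⟩,
    ⟨!![0, 1, 1; 1, 1, 1; 1, 1, 0], by decide⟩,
    ⟨!![1, 1, 0; 1, 1, 1; 0, 1, 1], by decide⟩,
    ⟨!![0, 0, 1; 0, 1, 0; 1, 0, 1], by decide⟩,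
    ⟨!![1, 1, 1; 1, 0, 0; 1, 0, 1], by decide⟩]

set_option maxRecDepth 100000 in
theorem exists_mem_transposeConjugators (g : SL3F2) :
    ∃ c ∈ transposeConjugators, c * g = g.transpose * c := by
  revert g
  decide

theorem isConj_transpose (g : SL3F2) : IsConj g g.transpose := by
  obtain ⟨c, -, hc⟩ := exists_mem_transposeConjugators g
  exact ⟨toUnits c, hc⟩

end SL3F2

/-- **Opposite parabolics in `SL₃(𝔽₂)` are almost conjugate.** The subgroups
`A = {a : a₂₁ = a₃₁ = 0}` and `B = {b : b₁₂ = b₁₃ = 0}` (entries written 1-indexed) are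
almost conjugate: for every `g ∈ SL₃(𝔽₂)`, the number of elements of `A` conjugate to `g`
equals the number of elements of `B` conjugate to `g`. -/
theorem sl3_parabolics_almost_conjugate (A B : Subgroup SL3F2)
    (hA : (A : Set SL3F2) =
      {a : SL3F2 | (a : Matrix (Fin 3) (Fin 3) (ZMod 2)) 1 0 = 0 ∧
        (a : Matrix (Fin 3) (Fin 3) (ZMod 2)) 2 0 = 0})
    (hB : (B : Set SL3F2) =
      {b : SL3F2 | (b : Matrix (Fin 3) (Fin 3) (ZMod 2)) 0 1 = 0 ∧
        (b : Matrix (Fin 3) (Fin 3) (ZMod 2)) 0 2 = 0}) :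
    ∀ g : SL3F2,
      Nat.card {a : SL3F2 // a ∈ A ∧ IsConj a g} =
      Nat.card {b : SL3F2 // b ∈ B ∧ IsConj b g} := by
  have mem_A_iff_transpose_mem_B (x : SL3F2) : x ∈ A ↔ x.transpose ∈ B := by
    rw [← SetLike.mem_coe, hA, ← SetLike.mem_coe, hB]
    rfl
  exact Subgroup.almostConjugate_of_equiv
    (Matrix.SpecialLinearGroup.transpose_involutive.toPerm _)
    (fun x => (SL3F2.isConj_transpose x).symm) mem_A_iff_transpose_mem_B
end

section
/- In G = SL₃(𝔽₂), the subgroups A = {a ∈ SL₃(𝔽₂) : a₂₁ = a₃₁ = 0} and B = {b ∈ SL₃(𝔽₂) : b₁₂ = b₁₃ = 0} are not conjugate: there is no g ∈ G with g·A·g⁻¹ = B. -/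
theorem MulAction.smul_smul_eq_of_mem_image_conj {G α : Type*} [Group G] [MulAction G α]
    {S : Set G} {v : α} (hS : ∀ a ∈ S, a • v = v) {g b : G}
    (hb : b ∈ (fun x => g * x * g⁻¹) '' S) : b • g • v = g • v := by
  obtain ⟨a, ha, rfl⟩ := hb
  simp only [mul_smul, inv_smul_smul, hS a ha]

namespace Matrix.SpecialLinearGroup

variable {R : Type*} [CommRing R]

theorem isUnit_apply_zero_zero_of_col_zero {n : ℕ} (a : SpecialLinearGroup (Fin (n + 1)) R)
    (ha : ∀ i : Fin n, (a : Matrix (Fin (n + 1)) (Fin (n + 1)) R) i.succ 0 = 0) :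
    IsUnit ((a : Matrix (Fin (n + 1)) (Fin (n + 1)) R) 0 0) := by
  have hdet := a.det_coe
  rw [det_succ_column_zero, Fin.sum_univ_succ] at hdet
  simp only [ha, mul_zero, zero_mul, Finset.sum_const_zero, add_zero, Fin.val_zero, pow_zero,
    one_mul] at hdet
  exact IsUnit.of_mul_eq_one _ hdet

theorem smul_single_zero_of_col_zero {n : ℕ} (a : SpecialLinearGroup (Fin (n + 1)) R)
    (ha : ∀ i : Fin n, (a : Matrix (Fin (n + 1)) (Fin (n + 1)) R) i.succ 0 = 0) :
    a • (Pi.single 0 1 : Fin (n + 1) → R) =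
      Pi.single 0 ((a : Matrix (Fin (n + 1)) (Fin (n + 1)) R) 0 0) := by
  ext i
  cases i using Fin.cases <;> simp [SpecialLinearGroup.smul_def, ha]

theorem apply_eq_zero_of_transvection_smul_eq {ι : Type*} [Fintype ι] [DecidableEq ι]
    {i j : ι} (hij : i ≠ j) {v : ι → R} (hv : transvection hij (1 : R) • v = v) : v j = 0 := by
  simpa [SpecialLinearGroup.smul_def, transvection_coe, add_mulVec, single_mulVec_eq] using
    congrFun hv i

theorem eq_zero_of_forall_smul_eq_of_row_zero {v : Fin 3 → R}
    (hv : ∀ b : SpecialLinearGroup (Fin 3) R, (b : Matrix (Fin 3) (Fin 3) R) 0 1 = 0 →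
      (b : Matrix (Fin 3) (Fin 3) R) 0 2 = 0 → b • v = v) : v = 0 := by
  have coord_eq_zero {i j : Fin 3} (hij : i ≠ j) (hi : i ≠ 0) : v j = 0 :=
    apply_eq_zero_of_transvection_smul_eq hij <| hv _
      (by simp [transvection_coe, single_apply_of_row_ne hi])
      (by simp [transvection_coe, single_apply_of_row_ne hi])
  ext j
  fin_cases j
  · exact coord_eq_zero (i := 1) (by decide) (by decide)
  · exact coord_eq_zero (i := 2) (by decide) (by decide)
  · exact coord_eq_zero (i := 1) (by decide) (by decide)

end Matrix.SpecialLinearGroup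

open Matrix.SpecialLinearGroup in
theorem smul_single_zero_eq_self_of_col_zero (a : SL3F2)
    (h1 : (a : Matrix (Fin 3) (Fin 3) (ZMod 2)) 1 0 = 0)
    (h2 : (a : Matrix (Fin 3) (Fin 3) (ZMod 2)) 2 0 = 0) :
    a • (Pi.single 0 1 : Fin 3 → ZMod 2) = Pi.single 0 1 := by
  have ha : ∀ i : Fin 2, (a : Matrix (Fin 3) (Fin 3) (ZMod 2)) i.succ 0 = 0 := by
    intro i; fin_cases i <;> assumption
  have hunit : ∀ x : ZMod 2, x ≠ 0 → x = 1 := by decide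
  rw [smul_single_zero_of_col_zero a ha,
    hunit _ (isUnit_apply_zero_zero_of_col_zero a ha).ne_zero]

/-- **Opposite parabolics in `SL₃(𝔽₂)` are not conjugate.** There is no `g ∈ SL₃(𝔽₂)` with
`g • A • g⁻¹ = B`, where `A = {a : a₂₁ = a₃₁ = 0}` and `B = {b : b₁₂ = b₁₃ = 0}`
(entries written 1-indexed). -/
theorem sl3_parabolics_not_conjugate (A B : Subgroup SL3F2)
    (hA : (A : Set SL3F2) =
      {a : SL3F2 | (a : Matrix (Fin 3) (Fin 3) (ZMod 2)) 1 0 = 0 ∧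
        (a : Matrix (Fin 3) (Fin 3) (ZMod 2)) 2 0 = 0})
    (hB : (B : Set SL3F2) =
      {b : SL3F2 | (b : Matrix (Fin 3) (Fin 3) (ZMod 2)) 0 1 = 0 ∧
        (b : Matrix (Fin 3) (Fin 3) (ZMod 2)) 0 2 = 0}) :
    ¬ ∃ g : SL3F2, (fun x => g * x * g⁻¹) '' (A : Set SL3F2) = (B : Set SL3F2) := by
  rintro ⟨g, hg⟩
  set e₀ : Fin 3 → ZMod 2 := Pi.single 0 1
  have hA_fix : ∀ a ∈ (A : Set SL3F2), a • e₀ = e₀ := by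
    rw [hA]
    exact fun a ⟨h1, h2⟩ => smul_single_zero_eq_self_of_col_zero a h1 h2
  have hg_e₀ : g • e₀ = 0 :=
    Matrix.SpecialLinearGroup.eq_zero_of_forall_smul_eq_of_row_zero fun b h1 h2 =>
      MulAction.smul_smul_eq_of_mem_image_conj hA_fix (by rw [hg, hB]; exact ⟨h1, h2⟩)
  exact Pi.single_ne_zero_iff.mpr one_ne_zero ((smul_eq_zero_iff_eq g).mp hg_e₀)
end

section
/- The group SL₃(𝔽₂) is generated by the two matrices a₁ = [[0,1,1],[0,1,0],[1,0,0]] and a₂ = [[1,0,0],[0,0,1],[0,1,1]]; that is, the subgroup closure of {a₁, a₂} in SL₃(𝔽₂) is the whole group. -/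
/-- The matrix `a₁ = [[0,1,1],[0,1,0],[1,0,0]]` as an element of `SL₃(𝔽₂)`. -/
def sl3a1 : SL3F2 := ⟨!![0, 1, 1; 0, 1, 0; 1, 0, 0], by decide⟩

/-- The matrix `a₂ = [[1,0,0],[0,0,1],[0,1,1]]` as an element of `SL₃(𝔽₂)`. -/
def sl3a2 : SL3F2 := ⟨!![1, 0, 0; 0, 0, 1; 0, 1, 1], by decide⟩

namespace Matrix.SpecialLinearGroup

variable {n : Type*} [Fintype n] [DecidableEq n]

theorem eq_top_of_forall_transvection_one_mem [Nontrivial n]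
    {H : Subgroup (SpecialLinearGroup n (ZMod 2))}
    (h : ∀ (i j : n) (hij : i ≠ j), transvection hij 1 ∈ H) : H = ⊤ := by
  refine eq_top_iff.2 fun M _ =>
    diagonal_transvection_induction' (· ∈ H) M ?_ ?_ fun _ _ => H.mul_mem
  · intro i j hij c hc
    obtain rfl : c = 1 := by decide +revert
    convert H.one_mem
    ext1
    simp [diag2n_coe]
  · intro i j hij a
    obtain rfl | rfl : a = 0 ∨ a = 1 := by decide +revert
    · rw [transvection_coeff_zero]
      exact H.one_mem
    · exact h i j hij

end Matrix.SpecialLinearGroup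

open Matrix.SpecialLinearGroup

theorem transvection_two_zero_eq_pow :
    transvection (by decide : (2 : Fin 3) ≠ 0) (1 : ZMod 2) =
      (sl3a1 * sl3a2 * sl3a2 * sl3a1) ^ 2 := by
  decide

theorem exists_transvection_mul_eq_mul_transvection_two_zero (i j : Fin 3) (hij : i ≠ j) :
    ∃ k : Fin 3, ∃ b : Fin 2,
      transvection hij (1 : ZMod 2) * ((sl3a1 * sl3a2) ^ (k : ℕ) * sl3a1 ^ (b : ℕ)) =
        (sl3a1 * sl3a2) ^ (k : ℕ) * sl3a1 ^ (b : ℕ) *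
          transvection (by decide : (2 : Fin 3) ≠ 0) 1 := by
  revert i j
  decide

/-- **Generators of `SL₃(𝔽₂)`.** The group `SL₃(𝔽₂)` is generated by the two matrices
`a₁ = [[0,1,1],[0,1,0],[1,0,0]]` and `a₂ = [[1,0,0],[0,0,1],[0,1,1]]`. -/
theorem sl3_generated : Subgroup.closure ({sl3a1, sl3a2} : Set SL3F2) = ⊤ := by
  set H := Subgroup.closure ({sl3a1, sl3a2} : Set SL3F2)
  have ha₁ : sl3a1 ∈ H := Subgroup.subset_closure (by simp)
  have ha₂ : sl3a2 ∈ H := Subgroup.subset_closure (by simp)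
  have ht : transvection (by decide : (2 : Fin 3) ≠ 0) (1 : ZMod 2) ∈ H := by
    rw [transvection_two_zero_eq_pow]
    exact H.pow_mem (H.mul_mem (H.mul_mem (H.mul_mem ha₁ ha₂) ha₂) ha₁) _
  refine eq_top_of_forall_transvection_one_mem fun i j hij => ?_
  obtain ⟨k, b, hconj⟩ := exists_transvection_mul_eq_mul_transvection_two_zero i j hij
  have hg : (sl3a1 * sl3a2) ^ (k : ℕ) * sl3a1 ^ (b : ℕ) ∈ H :=
    H.mul_mem (H.pow_mem (H.mul_mem ha₁ ha₂) _) (H.pow_mem ha₁ _)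
  rw [eq_mul_inv_of_mul_eq hconj]
  exact H.mul_mem (H.mul_mem hg ht) (H.inv_mem hg)
end

section
/- In the symmetric group S₆ on {1,2,3,4,5,6}, the subgroups A = {id, (1 2)(3 4), (1 3)(2 4), (1 4)(2 3)} and B = {id, (1 2)(3 4), (1 2)(5 6), (3 4)(5 6)} are almost conjugate: for every g ∈ S₆, the number of elements of A conjugate in S₆ to g equals the number of elements of B conjugate in S₆ to g. -/
/-!
Almost conjugacy only sees how many elements of each conjugacy class a subgroup contains, so a
bijection `A → B` that moves every element inside its conjugacy class suffices. Both groups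
consist of `1`, `(1 2)(3 4)` and two further double transpositions, and all double transpositions
are conjugate in `S₆`.
-/

/-- The permutation `ρ = (1 5 3 6)(2 4)` of `{1,…,6}`, written 0-indexed on `Fin 6`
as `(0 4 2 5)(1 3)`. -/
def rho : Equiv.Perm (Fin 6) := c[0, 4, 2, 5] * c[1, 3]

/-- The permutation `ρ' = (1 2 3 4)(5 6)` of `{1,…,6}`, written 0-indexed on `Fin 6`
as `(0 1 2 3)(4 5)`. -/
def rho' : Equiv.Perm (Fin 6) := c[0, 1, 2, 3] * c[4, 5]

/-- The Klein four-subgroup `A = {id, (1 2)(3 4), (1 3)(2 4), (1 4)(2 3)}` of `S₆`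
(written 0-indexed on `Fin 6`), as a set. -/
def setA6 : Set (Equiv.Perm (Fin 6)) :=
  {1, c[0, 1] * c[2, 3], c[0, 2] * c[1, 3], c[0, 3] * c[1, 2]}

/-- The Klein four-subgroup `B = {id, (1 2)(3 4), (1 2)(5 6), (3 4)(5 6)}` of `S₆`
(written 0-indexed on `Fin 6`), as a set. -/
def setB6 : Set (Equiv.Perm (Fin 6)) :=
  {1, c[0, 1] * c[2, 3], c[0, 1] * c[4, 5], c[2, 3] * c[4, 5]}

theorem Set.BijOn.natCard_mem_isConj_eq {G : Type*} [Monoid G] {s t : Set G} {f : G → G}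
    (hf : Set.BijOn f s t) (hconj : ∀ a ∈ s, IsConj a (f a)) (g : G) :
    Nat.card {a // a ∈ s ∧ IsConj a g} = Nat.card {b // b ∈ t ∧ IsConj b g} := by
  refine Nat.card_congr (Set.BijOn.equiv f ⟨?_, hf.injOn.mono fun a ha => ha.1, ?_⟩)
  · exact fun a ⟨ha, hag⟩ => ⟨hf.mapsTo ha, (hconj a ha).symm.trans hag⟩
  · rintro b ⟨hb, hbg⟩
    obtain ⟨a, ha, rfl⟩ := hf.surjOn hb
    exact ⟨a, ⟨ha, (hconj a ha).trans hbg⟩, rfl⟩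

open Equiv in
theorem exists_bijOn_setA6_setB6_isConj :
    ∃ e : Perm (Perm (Fin 6)), Set.BijOn e setA6 setB6 ∧ ∀ a ∈ setA6, IsConj a (e a) := by
  let e : Perm (Perm (Fin 6)) :=
    swap (c[0, 2] * c[1, 3]) (c[0, 1] * c[4, 5]) * swap (c[0, 3] * c[1, 2]) (c[2, 3] * c[4, 5])
  have himage : e '' setA6 = setB6 := by
    simp only [setA6, setB6, Set.image_insert_eq, Set.image_singleton]
    refine congrArg₂ _ ?_ (congrArg₂ _ ?_ (congrArg₂ _ ?_ (congrArg _ ?_))) <;> decide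
  refine ⟨e, himage ▸ e.bijOn_image, ?_⟩
  simp only [setA6, Set.mem_insert_iff, Set.mem_singleton_iff]
  rintro a (rfl | rfl | rfl | rfl)
  · exact isConj_iff.mpr ⟨1, by decide⟩
  · exact isConj_iff.mpr ⟨1, by decide⟩
  · exact isConj_iff.mpr ⟨c[1, 4, 2] * c[3, 5], by decide⟩
  · exact isConj_iff.mpr ⟨c[0, 2, 5] * c[1, 4], by decide⟩

/-- **The two Klein four-subgroups of `S₆` are almost conjugate.** For every `g ∈ S₆`, the
number of elements of `A = {id, (1 2)(3 4), (1 3)(2 4), (1 4)(2 3)}` conjugate in `S₆` to `g`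
equals the number of elements of `B = {id, (1 2)(3 4), (1 2)(5 6), (3 4)(5 6)}` conjugate
in `S₆` to `g`. -/
theorem s6_klein_almost_conjugate (A B : Subgroup (Equiv.Perm (Fin 6)))
    (hA : (A : Set (Equiv.Perm (Fin 6))) = setA6)
    (hB : (B : Set (Equiv.Perm (Fin 6))) = setB6) :
    ∀ g : Equiv.Perm (Fin 6),
      Nat.card {a : Equiv.Perm (Fin 6) // a ∈ A ∧ IsConj a g} =
      Nat.card {b : Equiv.Perm (Fin 6) // b ∈ B ∧ IsConj b g} := by
  intro g
  obtain ⟨e, he, hconj⟩ := exists_bijOn_setA6_setB6_isConj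
  rw [← hA, ← hB] at he
  rw [← hA] at hconj
  exact he.natCard_mem_isConj_eq hconj g
end

section
/- Let A = {id, (1 2)(3 4), (1 3)(2 4), (1 4)(2 3)} ≤ S₆, and let ρ = (1 5 3 6)(2 4) and ρ′ = (1 2 3 4)(5 6) in S₆. Then for every σ ∈ S₆, it is not the case that both σρ²σ⁻¹ ∈ A and σ(ρ′)²σ⁻¹ ∈ A. Consequently, for any right coset Aσ, if the least positive n with σρⁿσ⁻¹ ∈ A equals 2 then the least positive n with σ(ρ′)ⁿσ⁻¹ ∈ A equals 4, and vice versa. -/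
/-!
Every element of `A` moves only the points `1, 2, 3, 4`, while `ρ² = (1 3)(5 6)` and
`ρ'² = (1 3)(2 4)` together move all six points. Conjugation by `σ` transports supports along
`σ`, so `σρ²σ⁻¹` and `σρ'²σ⁻¹` cannot both have support inside `{1, 2, 3, 4}`.

For the least exponents: `ρ` and `ρ'` have order `4` and every element of `A` squares to `1`,
so if `σρ^nσ⁻¹ ∈ A` for an odd `n`, then `σρ²σ⁻¹ = (σρ^nσ⁻¹)²` (as `ρ^(2n) = ρ²`) lies in `A`.
Hence once `σρ²σ⁻¹ ∉ A`, the least such exponent is `4`.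
-/

theorem Nat.mem_of_sInf_eq_of_ne_zero {s : Set ℕ} {n : ℕ} (hs : sInf s = n) (hn : n ≠ 0) :
    n ∈ s :=
  hs ▸ Nat.sInf_mem (Set.nonempty_iff_ne_empty.2 fun h => hn (by rw [← hs, h, Nat.sInf_empty]))

theorem sInf_conj_pow_mem_eq_four {G : Type*} [Group G] {S : Set G} (one_mem : (1 : G) ∈ S)
    (sq_mem : ∀ x ∈ S, x ^ 2 ∈ S) {σ τ : G} (hτ : τ ^ 4 = 1) (h2 : σ * τ ^ 2 * σ⁻¹ ∉ S) :
    sInf {n : ℕ | 0 < n ∧ σ * τ ^ n * σ⁻¹ ∈ S} = 4 := by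
  have not_mem_of_pow_mul_two : ∀ n, τ ^ (n * 2) = τ ^ 2 → σ * τ ^ n * σ⁻¹ ∉ S :=
    fun n hn hS => h2 (by simpa only [conj_pow, ← pow_mul, hn] using sq_mem _ hS)
  have four_mem : 4 ∈ {n : ℕ | 0 < n ∧ σ * τ ^ n * σ⁻¹ ∈ S} :=
    ⟨by norm_num, by rwa [hτ, mul_one, mul_inv_cancel]⟩
  refine le_antisymm (Nat.sInf_le four_mem) (le_csInf ⟨4, four_mem⟩ ?_)
  rintro m ⟨hm, hmS⟩
  by_contra! hlt
  interval_cases m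
  · exact not_mem_of_pow_mul_two 1 rfl hmS
  · exact h2 hmS
  · exact not_mem_of_pow_mul_two 3 (by rw [show 3 * 2 = 4 + 2 by rfl, pow_add, hτ, one_mul]) hmS

theorem Equiv.Perm.card_support_union_le_of_support_conj_subset {α : Type*} [DecidableEq α]
    [Fintype α] {σ x y : Equiv.Perm α} {s : Finset α} (hx : (σ * x * σ⁻¹).support ⊆ s)
    (hy : (σ * y * σ⁻¹).support ⊆ s) : (x.support ∪ y.support).card ≤ s.card := by
  rw [support_conj] at hx hy
  calc (x.support ∪ y.support).card
      = ((x.support ∪ y.support).map σ.toEmbedding).card := (Finset.card_map _).symm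
    _ ≤ s.card := Finset.card_le_card (by rw [Finset.map_union]; exact Finset.union_subset hx hy)

theorem one_mem_setA6 : 1 ∈ setA6 := Set.mem_insert _ _

theorem sq_eq_one_of_mem_setA6 {x : Equiv.Perm (Fin 6)} (hx : x ∈ setA6) : x ^ 2 = 1 := by
  simp only [setA6, Set.mem_insert_iff, Set.mem_singleton_iff] at hx
  rcases hx with rfl | rfl | rfl | rfl <;> decide

theorem support_subset_of_mem_setA6 {x : Equiv.Perm (Fin 6)} (hx : x ∈ setA6) :
    x.support ⊆ {0, 1, 2, 3} := by
  simp only [setA6, Set.mem_insert_iff, Set.mem_singleton_iff] at hx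
  rcases hx with rfl | rfl | rfl | rfl <;> decide

theorem support_rho_sq_union_support_rho'_sq :
    (rho ^ 2).support ∪ (rho' ^ 2).support = Finset.univ := by
  decide

theorem not_conj_rho_sq_mem_setA6_and_conj_rho'_sq_mem_setA6 (σ : Equiv.Perm (Fin 6)) :
    ¬ (σ * rho ^ 2 * σ⁻¹ ∈ setA6 ∧ σ * rho' ^ 2 * σ⁻¹ ∈ setA6) := by
  rintro ⟨h, h'⟩
  have hcard := Equiv.Perm.card_support_union_le_of_support_conj_subset
    (support_subset_of_mem_setA6 h) (support_subset_of_mem_setA6 h')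
  rw [support_rho_sq_union_support_rho'_sq] at hcard
  exact absurd hcard (by decide)

/-- **Conjugates of `ρ²` and `(ρ')²` cannot both lie in `A`.** For every `σ ∈ S₆`, it is not
the case that both `σρ²σ⁻¹ ∈ A` and `σ(ρ')²σ⁻¹ ∈ A`. Consequently, for each `σ` (the
conditions depending only on the right coset `Aσ`), if the least positive `n` with
`σρⁿσ⁻¹ ∈ A` equals `2` then the least positive `n` with `σ(ρ')ⁿσ⁻¹ ∈ A` equals `4`,
and vice versa. -/
theorem s6_A_not_both_degree_two :
    ∀ σ : Equiv.Perm (Fin 6),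
      (¬ (σ * rho ^ 2 * σ⁻¹ ∈ setA6 ∧ σ * rho' ^ 2 * σ⁻¹ ∈ setA6)) ∧
      ((sInf {n : ℕ | 0 < n ∧ σ * rho ^ n * σ⁻¹ ∈ setA6} = 2 →
          sInf {n : ℕ | 0 < n ∧ σ * rho' ^ n * σ⁻¹ ∈ setA6} = 4) ∧
        (sInf {n : ℕ | 0 < n ∧ σ * rho' ^ n * σ⁻¹ ∈ setA6} = 2 →
          sInf {n : ℕ | 0 < n ∧ σ * rho ^ n * σ⁻¹ ∈ setA6} = 4)) := by
  intro σ
  have not_both := not_conj_rho_sq_mem_setA6_and_conj_rho'_sq_mem_setA6 σ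
  have sq_mem : ∀ x ∈ setA6, x ^ 2 ∈ setA6 := fun x hx => by
    rw [sq_eq_one_of_mem_setA6 hx]; exact one_mem_setA6
  refine ⟨not_both, fun h => ?_, fun h => ?_⟩
  · refine sInf_conj_pow_mem_eq_four one_mem_setA6 sq_mem (by decide) fun h' => not_both ⟨?_, h'⟩
    exact (Nat.mem_of_sInf_eq_of_ne_zero h two_ne_zero).2
  · refine sInf_conj_pow_mem_eq_four one_mem_setA6 sq_mem (by decide) fun h' => not_both ⟨h', ?_⟩
    exact (Nat.mem_of_sInf_eq_of_ne_zero h two_ne_zero).2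
end

section
/- Let B = {id, (1 2)(3 4), (1 2)(5 6), (3 4)(5 6)} ≤ S₆, and let ρ = (1 5 3 6)(2 4) and ρ′ = (1 2 3 4)(5 6) in S₆. Then for every τ ∈ S₆, one has τρ²τ⁻¹ ∈ B if and only if τ(ρ′)²τ⁻¹ ∈ B. Consequently, for every right coset Bτ, the least positive n with τρⁿτ⁻¹ ∈ B equals the least positive n with τ(ρ′)ⁿτ⁻¹ ∈ B. -/
/-!
The blocks `{0,1}, {2,3}, {4,5}` partition `Fin 6`, and a product of two swaps on distinct
pairs lies in `B` exactly when both pairs are blocks. So `τρ²τ⁻¹ = τ(0 2)(4 5)τ⁻¹ ∈ B` iff `τ`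
maps `{0,2}` and `{4,5}` onto blocks, and then it also maps the complementary pair `{1,3}` onto
the third block; this makes the condition symmetric in `ρ² = (0 2)(4 5)` and
`ρ'² = (0 2)(1 3)`. Since `ρ, ρ'` have order 4 and every element of `B` squares to 1, the least
`n > 0` with `τσⁿτ⁻¹ ∈ B` is 2 or 4 according as `τσ²τ⁻¹ ∈ B` or not, for both `σ = ρ, ρ'`.
-/

open Equiv Finset

section ExponentTwo

variable {G : Type*} [Group G]

lemma pow_two_mul_eq_one_of_conj_pow_mem {S : Set G} (hS : ∀ x ∈ S, x ^ 2 = 1) {τ g : G} {n : ℕ}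
    (h : τ * g ^ n * τ⁻¹ ∈ S) : g ^ (2 * n) = 1 := by
  have := hS _ h
  rwa [← conj_pow, ← pow_mul', conj_pow, conj_eq_one_iff] at this

open Classical in
lemma sInf_conj_pow_mem_eq {S : Set G} (hS1 : 1 ∈ S) (hS : ∀ x ∈ S, x ^ 2 = 1) (τ : G) {g : G}
    (hg4 : g ^ 4 = 1) (hg2 : g ^ 2 ≠ 1) :
    sInf {n : ℕ | 0 < n ∧ τ * g ^ n * τ⁻¹ ∈ S} = if τ * g ^ 2 * τ⁻¹ ∈ S then 2 else 4 := by
  have h1 : τ * g ^ 1 * τ⁻¹ ∉ S := fun h => hg2 (pow_two_mul_eq_one_of_conj_pow_mem hS h)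
  have h3 : τ * g ^ 3 * τ⁻¹ ∉ S := fun h => by
    have h6 := pow_two_mul_eq_one_of_conj_pow_mem hS h
    rw [show 2 * 3 = 2 + 4 from rfl, pow_add, hg4, mul_one] at h6
    exact hg2 h6
  refine IsLeast.csInf_eq ⟨?_, fun n ⟨hn, hmem⟩ => ?_⟩ <;> split_ifs with h2
  · exact ⟨two_pos, h2⟩
  · exact ⟨four_pos, by rwa [hg4, mul_one, mul_inv_cancel]⟩
  all_goals by_contra hlt; interval_cases n <;> contradiction

end ExponentTwo

lemma mem_setB6_iff {x : Perm (Fin 6)} :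
    x ∈ setB6 ↔ x = 1 ∨ x = swap 0 1 * swap 2 3 ∨ x = swap 0 1 * swap 4 5 ∨
      x = swap 2 3 * swap 4 5 := by
  simp only [setB6, Set.mem_insert_iff, Set.mem_singleton_iff]
  rfl

lemma sq_eq_one_of_mem_setB6 {x : Perm (Fin 6)} (hx : x ∈ setB6) : x ^ 2 = 1 := by
  rcases mem_setB6_iff.mp hx with rfl | rfl | rfl | rfl <;> decide

def blocksB6 : Finset (Finset (Fin 6)) := {{0, 1}, {2, 3}, {4, 5}}

set_option maxRecDepth 4000 in
lemma swap_mul_swap_mem_setB6_iff : ∀ a b c d : Fin 6, a ≠ b → c ≠ d →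
    ({a, b} : Finset (Fin 6)) ≠ {c, d} →
    (swap a b * swap c d ∈ setB6 ↔ {a, b} ∈ blocksB6 ∧ {c, d} ∈ blocksB6) := by
  simp only [mem_setB6_iff]
  decide

set_option maxRecDepth 10000 in
lemma compl_union_mem_blocksB6 :
    ∀ s ∈ blocksB6, ∀ t ∈ blocksB6, s ≠ t → univ \ (s ∪ t) ∈ blocksB6 := by
  decide

lemma map_sdiff_union_mem_blocksB6 (τ : Perm (Fin 6)) {s t : Finset (Fin 6)}
    (hs : s.map τ.toEmbedding ∈ blocksB6) (ht : t.map τ.toEmbedding ∈ blocksB6) (hst : s ≠ t) :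
    (univ \ (s ∪ t)).map τ.toEmbedding ∈ blocksB6 := by
  rw [Finset.map_sdiff, map_union, map_univ_equiv]
  exact compl_union_mem_blocksB6 _ hs _ ht ((map_injective _).ne hst)

lemma conj_swap_mul_swap_mem_setB6_iff (τ : Perm (Fin 6)) {a b c d : Fin 6} (hab : a ≠ b)
    (hcd : c ≠ d) (hne : ({a, b} : Finset (Fin 6)) ≠ {c, d}) :
    τ * (swap a b * swap c d) * τ⁻¹ ∈ setB6 ↔
      ({a, b} : Finset (Fin 6)).map τ.toEmbedding ∈ blocksB6 ∧
        ({c, d} : Finset (Fin 6)).map τ.toEmbedding ∈ blocksB6 := by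
  have hmap (x y : Fin 6) : ({x, y} : Finset (Fin 6)).map τ.toEmbedding = {τ x, τ y} := by simp
  have hconj : τ * (swap a b * swap c d) * τ⁻¹ = swap (τ a) (τ b) * swap (τ c) (τ d) := by
    rw [swap_apply_apply, swap_apply_apply]
    group
  rw [hconj, hmap, hmap]
  refine swap_mul_swap_mem_setB6_iff _ _ _ _ (τ.injective.ne hab) (τ.injective.ne hcd) ?_
  rw [← hmap, ← hmap]
  exact (map_injective _).ne hne

theorem conj_rho_sq_mem_setB6_iff (τ : Perm (Fin 6)) :
    τ * rho ^ 2 * τ⁻¹ ∈ setB6 ↔ τ * rho' ^ 2 * τ⁻¹ ∈ setB6 := by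
  have hρ : rho ^ 2 = swap 0 2 * swap 4 5 := by decide
  have hρ' : rho' ^ 2 = swap 0 2 * swap 1 3 := by decide
  rw [hρ, hρ', conj_swap_mul_swap_mem_setB6_iff τ (by decide) (by decide) (by decide),
    conj_swap_mul_swap_mem_setB6_iff τ (by decide) (by decide) (by decide)]
  refine and_congr_right fun h02 => ⟨fun h45 => ?_, fun h13 => ?_⟩
  · have h13 := map_sdiff_union_mem_blocksB6 τ h02 h45 (by decide)
    rwa [show univ \ ({0, 2} ∪ {4, 5}) = ({1, 3} : Finset (Fin 6)) by decide] at h13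
  · have h45 := map_sdiff_union_mem_blocksB6 τ h02 h13 (by decide)
    rwa [show univ \ ({0, 2} ∪ {1, 3}) = ({4, 5} : Finset (Fin 6)) by decide] at h45

/-- **For `B`, conjugates of `ρ²` and `(ρ')²` lie in `B` simultaneously.** For every
`τ ∈ S₆`, `τρ²τ⁻¹ ∈ B` if and only if `τ(ρ')²τ⁻¹ ∈ B`, where
`B = {id, (1 2)(3 4), (1 2)(5 6), (3 4)(5 6)}`. Consequently, for every `τ` (the conditions
depending only on the right coset `Bτ`), the least positive `n` with `τρⁿτ⁻¹ ∈ B` equals the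
least positive `n` with `τ(ρ')ⁿτ⁻¹ ∈ B`. -/
theorem s6_B_same_degree :
    ∀ τ : Equiv.Perm (Fin 6),
      (τ * rho ^ 2 * τ⁻¹ ∈ setB6 ↔ τ * rho' ^ 2 * τ⁻¹ ∈ setB6) ∧
      sInf {n : ℕ | 0 < n ∧ τ * rho ^ n * τ⁻¹ ∈ setB6} =
        sInf {n : ℕ | 0 < n ∧ τ * rho' ^ n * τ⁻¹ ∈ setB6} := by
  classical
  intro τ
  have hB1 : (1 : Perm (Fin 6)) ∈ setB6 := mem_setB6_iff.mpr (Or.inl rfl)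
  refine ⟨conj_rho_sq_mem_setB6_iff τ, ?_⟩
  rw [sInf_conj_pow_mem_eq hB1 (fun _ => sq_eq_one_of_mem_setB6) τ (by decide) (by decide),
    sInf_conj_pow_mem_eq hB1 (fun _ => sq_eq_one_of_mem_setB6) τ (by decide) (by decide)]
  exact if_congr (conj_rho_sq_mem_setB6_iff τ) rfl rfl
end
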